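/- For all z > 0 and k ≥ 1, φ_k(z) − 1 < φ_{k−1}(z), i.e., 1 − φ_k(z) + φ_{k−1}(z) > 0. -/

import Mathlib

open Real Filter Set

/-- `truncExpSum k z = Σ_{j≥k} z^j/j!`. -/
noncomputable def truncExpSum (k : ℕ) (z : ℝ) : ℝ :=
  ∑' j : ℕ, if k ≤ j then z ^ j / (Nat.factorial j : ℝ) else 0

/-- `poisTail k z = P(Poi(z) ≥ k) = e^{-z} Σ_{j≥k} z^j/j!`. -/
noncomputable def poisTail (k : ℕ) (z : ℝ) : ℝ := Real.exp (-z) * truncExpSum k z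

/-- Mean of Poisson(z) conditioned on being ≥ k: `ψ_k(z) = z f_{k-1}(z)/f_k(z)`. -/
noncomputable def truncMean (k : ℕ) (z : ℝ) : ℝ :=
  z * truncExpSum (k - 1) z / truncExpSum k z

/-- Second moment of the truncated Poisson. -/
noncomputable def truncSecondMoment (k : ℕ) (z : ℝ) : ℝ :=
  (∑' j : ℕ, if k ≤ j then (j : ℝ) ^ 2 * z ^ j / (Nat.factorial j : ℝ) else 0)
    / truncExpSum k z

/-- Variance of the truncated Poisson. -/
noncomputable def truncVar (k : ℕ) (z : ℝ) : ℝ :=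
  truncSecondMoment k z - (truncMean k z) ^ 2

/-- `φ_r(z) = z·P(Poi(z)=r−1)/P(Poi(z)≥r)` for `r ≥ 1`, with `φ_0 := 0`. -/
noncomputable def phiP (r : ℕ) (z : ℝ) : ℝ :=
  if r = 0 then 0
  else z * (Real.exp (-z) * z ^ (r - 1) / (Nat.factorial (r - 1) : ℝ)) / poisTail r z

/-- `H(z_i,z_o) = (1 − φ_{k_1}(z_i))(1 − φ_{k_2}(z_o)) − φ_{k_1−1}(z_i)φ_{k_2−1}(z_o)`. -/
noncomputable def Hfun (k1 k2 : ℕ) (zi zo : ℝ) : ℝ :=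
  (1 - phiP k1 zi) * (1 - phiP k2 zo) - phiP (k1 - 1) zi * phiP (k2 - 1) zo

/-- `Ψ(z_i,z_o) = max{ z_i/(p_{k_1}(z_i)p_{k_2−1}(z_o)), z_o/(p_{k_2}(z_o)p_{k_1−1}(z_i)) }`. -/
noncomputable def Psi (k1 k2 : ℕ) (zi zo : ℝ) : ℝ :=
  max (zi / (poisTail k1 zi * poisTail (k2 - 1) zo))
      (zo / (poisTail k2 zo * poisTail (k1 - 1) zi))

open scoped Nat

/-!
Write `a j = z ^ j / j!` and `T k = ∑_{j ≥ k} a j`. Then `φ_r(z) = r a_r / T_r` for every `r`,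
and since `(m + 1) a_{m+1} = z a_m`, the first two moments of the weights `a j` on `j ≥ m + 1`
are `S₁ = z T_m` and `S₂ = z (m a_m + (z + 1) T_m)`, with `S₀ = T_{m+1}`. After clearing
denominators the inequality becomes `S₁² < S₀ S₂`: the Poisson law truncated at `m + 1` has
positive variance, which is the strict Cauchy–Schwarz inequality for weights that charge two
distinct points.
-/

theorem sq_tsum_mul_lt_tsum_mul_tsum_sq_mul {ι : Type*} {w x : ι → ℝ} (hw : ∀ n, 0 ≤ w n)
    (h₀ : Summable w) (h₁ : Summable fun n => x n * w n)
    (h₂ : Summable fun n => x n ^ 2 * w n)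
    {i j : ι} (hi : 0 < w i) (hj : 0 < w j) (hij : x i ≠ x j) :
    (∑' n, x n * w n) ^ 2 < (∑' n, w n) * ∑' n, x n ^ 2 * w n := by
  set S₀ := ∑' n, w n
  set S₁ := ∑' n, x n * w n
  set S₂ := ∑' n, x n ^ 2 * w n
  have hS₀ : 0 < S₀ := h₀.tsum_pos hw i hi
  have hsq : Summable fun n => (x n * S₀ - S₁) ^ 2 * w n := by
    have := ((h₂.mul_left (S₀ ^ 2)).sub (h₁.mul_left (2 * S₀ * S₁))).add
      (h₀.mul_left (S₁ ^ 2))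
    exact this.congr fun n => by ring
  have hexpand : ∑' n, (x n * S₀ - S₁) ^ 2 * w n = S₀ * (S₀ * S₂ - S₁ ^ 2) := by
    calc ∑' n, (x n * S₀ - S₁) ^ 2 * w n
        = ∑' n, (S₀ ^ 2 * (x n ^ 2 * w n) - 2 * S₀ * S₁ * (x n * w n) + S₁ ^ 2 * w n) :=
          tsum_congr fun n => by ring
      _ = S₀ * (S₀ * S₂ - S₁ ^ 2) := by
          rw [((h₂.mul_left _).sub (h₁.mul_left _)).tsum_add (h₀.mul_left _),
            (h₂.mul_left _).tsum_sub (h₁.mul_left _), tsum_mul_left, tsum_mul_left,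
            tsum_mul_left]
          ring
  have hpos : 0 < ∑' n, (x n * S₀ - S₁) ^ 2 * w n := by
    by_cases hci : x i * S₀ - S₁ = 0
    · have hcj : x j * S₀ - S₁ ≠ 0 := fun hcj =>
        hij (mul_right_cancel₀ hS₀.ne' (by linarith))
      exact hsq.tsum_pos (fun n => mul_nonneg (sq_nonneg _) (hw n)) j
        (mul_pos (sq_pos_of_ne_zero hcj) hj)
    · exact hsq.tsum_pos (fun n => mul_nonneg (sq_nonneg _) (hw n)) i
        (mul_pos (sq_pos_of_ne_zero hci) hi)
  rw [hexpand] at hpos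
  linarith [pos_of_mul_pos_right hpos hS₀.le]

theorem summable_pow_mul_pow_div_factorial (p : ℕ) (z : ℝ) :
    Summable fun n : ℕ => (n : ℝ) ^ p * (z ^ n / n !) := by
  refine (Real.summable_pow_div_factorial (2 ^ p * |z|)).of_norm_bounded fun n => ?_
  have hn : (n : ℝ) ^ p ≤ (2 ^ p) ^ n := by
    rw [← pow_mul, mul_comm, pow_mul]
    exact pow_le_pow_left₀ n.cast_nonneg (by exact_mod_cast Nat.lt_two_pow_self.le) p
  rw [norm_mul, norm_div, norm_pow, norm_pow, Real.norm_natCast, Real.norm_natCast,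
    Real.norm_eq_abs, mul_pow, ← mul_div_assoc]
  gcongr

theorem natCast_succ_mul_pow_succ_div_factorial (n : ℕ) (z : ℝ) :
    ((n + 1 : ℕ) : ℝ) * (z ^ (n + 1) / (n + 1)!) = z * (z ^ n / n !) := by
  rw [Nat.factorial_succ, pow_succ]
  push_cast
  field_simp

section TruncExpSum

variable (z : ℝ)

theorem truncExpSum_eq_tsum_nat_add (k : ℕ) :
    truncExpSum k z = ∑' i, z ^ (i + k) / (i + k)! := by
  have hs : Summable fun j : ℕ => if k ≤ j then z ^ j / j ! else 0 :=
    (summable_nat_add_iff k).mp <| by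
      simpa using (summable_nat_add_iff k).mpr (Real.summable_pow_div_factorial z)
  rw [truncExpSum, ← hs.sum_add_tsum_nat_add k,
    Finset.sum_eq_zero fun i hi => if_neg (not_le.mpr (Finset.mem_range.mp hi)), zero_add]
  simp

theorem summable_pow_mul_pow_nat_add_div_factorial (p k : ℕ) :
    Summable fun i : ℕ => ((i + k : ℕ) : ℝ) ^ p * (z ^ (i + k) / (i + k)!) :=
  (summable_nat_add_iff k).mpr (summable_pow_mul_pow_div_factorial p z)

theorem truncExpSum_eq_add_succ (k : ℕ) :
    truncExpSum k z = z ^ k / k ! + truncExpSum (k + 1) z := by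
  simpa [truncExpSum_eq_tsum_nat_add, add_right_comm _ 1 k, add_assoc] using
    (by simpa using summable_pow_mul_pow_nat_add_div_factorial z 0 k :
      Summable fun i : ℕ => z ^ (i + k) / (i + k)!).tsum_eq_zero_add

theorem tsum_natCast_mul_pow_div_factorial_eq (m : ℕ) :
    ∑' i, ((i + (m + 1) : ℕ) : ℝ) * (z ^ (i + (m + 1)) / (i + (m + 1))!) =
      z * truncExpSum m z := by
  rw [truncExpSum_eq_tsum_nat_add, ← tsum_mul_left]
  exact tsum_congr fun i => natCast_succ_mul_pow_succ_div_factorial (i + m) z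

theorem tsum_natCast_sq_mul_pow_div_factorial_eq (m : ℕ) :
    ∑' i, ((i + (m + 1) : ℕ) : ℝ) ^ 2 * (z ^ (i + (m + 1)) / (i + (m + 1))!) =
      z * (m * (z ^ m / m !) + (z + 1) * truncExpSum m z) := by
  have hshift : ∑' i, ((i + m : ℕ) : ℝ) * (z ^ (i + m) / (i + m)!) =
      m * (z ^ m / m !) + z * truncExpSum m z := by
    rw [(by simpa using summable_pow_mul_pow_nat_add_div_factorial z 1 m :
      Summable fun i : ℕ => ((i + m : ℕ) : ℝ) * (z ^ (i + m) / (i + m)!)).tsum_eq_zero_add,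
      ← tsum_natCast_mul_pow_div_factorial_eq]
    simp [add_right_comm _ 1 m, add_assoc]
  have hterm : ∀ n : ℕ, ((n + 1 : ℕ) : ℝ) ^ 2 * (z ^ (n + 1) / (n + 1)!) =
      z * ((n : ℝ) * (z ^ n / n !) + z ^ n / n !) := fun n => by
    rw [sq, mul_assoc, natCast_succ_mul_pow_succ_div_factorial]
    push_cast
    ring
  calc _ = ∑' i, z * (((i + m : ℕ) : ℝ) * (z ^ (i + m) / (i + m)!)
          + z ^ (i + m) / (i + m)!) :=
        tsum_congr fun i => hterm (i + m)
    _ = _ := by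
      rw [tsum_mul_left, Summable.tsum_add ?_ ?_, hshift, truncExpSum_eq_tsum_nat_add]
      · ring
      · simpa using summable_pow_mul_pow_nat_add_div_factorial z 1 m
      · simpa using summable_pow_mul_pow_nat_add_div_factorial z 0 m

end TruncExpSum

theorem truncExpSum_pos {z : ℝ} (hz : 0 < z) (k : ℕ) : 0 < truncExpSum k z := by
  rw [truncExpSum_eq_tsum_nat_add]
  exact (by simpa using summable_pow_mul_pow_nat_add_div_factorial z 0 k : Summable _).tsum_pos
    (fun i => by positivity) 0 (by positivity)

theorem phiP_eq_natCast_mul_div_truncExpSum (r : ℕ) (z : ℝ) :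
    phiP r z = r * (z ^ r / r !) / truncExpSum r z := by
  rcases r with _ | m
  · simp [phiP]
  · rw [phiP, if_neg m.succ_ne_zero, poisTail, Nat.add_sub_cancel,
      natCast_succ_mul_pow_succ_div_factorial]
    have := (exp_pos (-z)).ne'
    field_simp

theorem mul_sq_truncExpSum_lt {z : ℝ} (hz : 0 < z) (m : ℕ) :
    z * truncExpSum m z ^ 2 <
      truncExpSum (m + 1) z * (m * (z ^ m / m !) + (z + 1) * truncExpSum m z) := by
  have hcs := sq_tsum_mul_lt_tsum_mul_tsum_sq_mul (i := 0) (j := 1)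
    (w := fun i => z ^ (i + (m + 1)) / (i + (m + 1))!) (x := fun i => ((i + (m + 1) : ℕ) : ℝ))
    (fun i => by positivity) (by simpa using summable_pow_mul_pow_nat_add_div_factorial z 0 (m + 1))
    (by simpa using summable_pow_mul_pow_nat_add_div_factorial z 1 (m + 1))
    (summable_pow_mul_pow_nat_add_div_factorial z 2 (m + 1)) (by positivity) (by positivity)
    (by simp)
  rw [tsum_natCast_mul_pow_div_factorial_eq, tsum_natCast_sq_mul_pow_div_factorial_eq,
    ← truncExpSum_eq_tsum_nat_add] at hcs
  exact lt_of_mul_lt_mul_left (by linear_combination hcs) hz.le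

/-- for `z > 0` and `k ≥ 1`, `φ_k(z) − 1 < φ_{k−1}(z)`. -/
theorem stmt7 (k : ℕ) (hk : 1 ≤ k) (z : ℝ) (hz : 0 < z) :
    phiP k z - 1 < phiP (k - 1) z := by
  obtain ⟨m, rfl⟩ : ∃ m, k = m + 1 := ⟨k - 1, by omega⟩
  have hvar := mul_sq_truncExpSum_lt hz m
  have hpos := truncExpSum_pos hz (m + 1)
  rw [phiP_eq_natCast_mul_div_truncExpSum, phiP_eq_natCast_mul_div_truncExpSum, Nat.add_sub_cancel,
    natCast_succ_mul_pow_succ_div_factorial, div_sub_one hpos.ne',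
    div_lt_div_iff₀ hpos (truncExpSum_pos hz m)]
  rw [truncExpSum_eq_add_succ z m] at hvar ⊢
  linear_combination hvar
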